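/- Let n be an even positive integer. For λ, x : Fin n → ℝ, define the E-orbit function of type D_n by E_λ(x) = ∑ exp(2πi ∑_i ε i · λ(σ⁻¹ i) · x i), where the sum runs over all pairs (σ, ε) with σ an even permutation of Fin n and ε : Fin n → ℝ satisfying ε i ∈ {1, −1} for all i and ∏_i ε i = +1 (an even number of sign changes). Then E_λ(x) is real-valued: conj(E_λ(x)) = E_λ(x) for all λ and x. -/
import Mathlib


/-- The `E`-orbit function of type `Dₙ` in orthogonal coordinates:
the sum of `exp(2πi ∑ᵢ ε i · λ(σ⁻¹ i) · x i)` over all pairs `(σ, ε)` with `σ` an even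
permutation, `ε i ∈ {1, −1}`, and `∏ᵢ ε i = 1` (an even number of sign changes). -/
noncomputable def EDn (n : ℕ) (lam x : Fin n → ℝ) : ℂ :=
  ∑ σ : alternatingGroup (Fin n),
    ∑ ε ∈ Fintype.piFinset (fun _ : Fin n => ({1, -1} : Finset ℝ)),
      if ∏ i, ε i = 1 then
        Complex.exp (2 * (Real.pi : ℂ) * Complex.I *
          ((∑ i, ε i * lam ((σ : Equiv.Perm (Fin n))⁻¹ i) * x i : ℝ) : ℂ))
      else 0

/-- For even `n`, the `E`-orbit functions of type `Dₙ` are real-valued. -/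
theorem EDn_real_of_even (n : ℕ) (hn : 0 < n) (heven : Even n) (lam x : Fin n → ℝ) :
    (starRingEnd ℂ) (EDn n lam x) = EDn n lam x := by
  unfold EDn
  rw [map_sum]
  refine Finset.sum_congr rfl fun σ _ => ?_
  rw [map_sum]
  have hneg : ∀ ε ∈ Fintype.piFinset (fun _ : Fin n => ({1, -1} : Finset ℝ)),
      (fun i => -ε i) ∈ Fintype.piFinset (fun _ : Fin n => ({1, -1} : Finset ℝ)) := by
    intro ε hε
    rw [Fintype.mem_piFinset] at hε ⊢
    intro i
    have := hε i
    simp only [Finset.mem_insert, Finset.mem_singleton] at this ⊢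
    rcases this with h | h <;> rw [h] <;> simp
  have hprod : ∀ ε : Fin n → ℝ, (∏ i, -ε i) = ∏ i, ε i := by
    intro ε
    have h1 : (∏ i, -ε i) = (-1 : ℝ) ^ n * ∏ i, ε i := by
      rw [show ((-1 : ℝ) ^ n) = ∏ _i : Fin n, (-1 : ℝ) by simp, ← Finset.prod_mul_distrib]
      exact Finset.prod_congr rfl fun i _ => by ring
    rw [h1, heven.neg_one_pow, one_mul]
  refine Finset.sum_nbij' (fun ε => fun i => -ε i) (fun ε => fun i => -ε i)
    hneg hneg (fun ε _ => by funext i; simp) (fun ε _ => by funext i; simp) ?_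
  intro ε hε
  have hc : (∏ i, ε i = 1) ↔ (∏ i, -ε i = 1) := by rw [hprod]
  by_cases h : ∏ i, ε i = 1
  · rw [if_pos h, if_pos (hc.mp h), ← Complex.exp_conj]
    congr 1
    simp only [map_mul, Complex.conj_I, Complex.conj_ofReal, map_ofNat]
    push_cast
    simp only [neg_mul, Finset.sum_neg_distrib]
    ring
  · rw [if_neg h, if_neg (fun hh => h (hc.mpr hh)), map_zero]
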